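/- Let K : ℝ → ℝ be even with K, ξK(ξ), ξ²K(ξ) ∈ L¹(ℝ), let k, a ∈ ℝ with k ≠ 0, let g : ℝ → ℂ be twice continuously differentiable and 2π-periodic, h : ℝ → ℂ continuously differentiable and 2π-periodic, and let n ∈ ℤ. Then K̂(q) = ∫_ℝ K(ξ)e^{−iqξ}dξ is twice differentiable, and the n-th Fourier coefficient of the 2π-periodic function θ ↦ (K∗_θh)(θ) − (K₁∗_θ(a g' + k h'))(θ) + ½ a k (K₂∗_θ g'')(θ) equals Ω'(nk)·ĥ(n) + ½ n a Ω''(nk)·ĝ(n), where Ω(q) = qK̂(q). -/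

import Mathlib

/-!
Taking Fourier coefficients turns the θ-convolution with `w` into multiplication by `ŵ(nk)`
(Fubini, then translation invariance of the coefficients of a `2π`-periodic function), and
differentiation into multiplication by `in` (integration by parts). Differentiating under the
integral sign gives `K̂' = -i K̂₁` and `K̂₁' = -i K̂₂` for the moments `K₁ = ξK`, `K₂ = ξ²K`, so
`Ω'(q) = K̂ - iq K̂₁` and `Ω''(q) = -2i K̂₁ - q K̂₂`; at `q = nk` both sides of the identity are
then the same polynomial in `K̂, K̂₁, K̂₂, ĥ(n), ĝ(n)`.
-/

open MeasureTheory Real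

/-- The Fourier transform `K̂(q) = ∫ K(ξ) e^{−iqξ} dξ` of `K`. -/
noncomputable def fourierKernel (K : ℝ → ℝ) (q : ℝ) : ℂ :=
  ∫ ξ : ℝ, (K ξ : ℂ) * Complex.exp (-Complex.I * q * ξ)

/-- The dispersion function `Ω(q) = q K̂(q)`. -/
noncomputable def dispersion (K : ℝ → ℝ) (q : ℝ) : ℂ :=
  (q : ℂ) * fourierKernel K q

theorem Function.Periodic.periodic_of_hasDerivAt {F : Type*} [NormedAddCommGroup F]
    [NormedSpace ℝ F] {f f' : ℝ → F} {c : ℝ} (hp : Function.Periodic f c)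
    (hf : ∀ x, HasDerivAt f (f' x) x) : Function.Periodic f' c := fun x =>
  ((hp.funext ▸ (hf (x + c)).comp_add_const x c) : HasDerivAt f _ x).unique (hf x)

theorem periodic_cexp_neg_I_int_mul (n : ℤ) :
    Function.Periodic (fun θ : ℝ => Complex.exp (-Complex.I * n * θ)) (2 * π) := fun θ => by
  dsimp only
  rw [show -Complex.I * n * ((θ + 2 * π : ℝ) : ℂ)
      = -Complex.I * n * θ + ((-n : ℤ) : ℂ) * (2 * π * Complex.I) by push_cast; ring,
    Complex.exp_add, Complex.exp_int_mul_two_pi_mul_I, mul_one]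

theorem Function.Periodic.mul_cexp_neg_I_int_mul {φ : ℝ → ℂ} (hφp : Function.Periodic φ (2 * π))
    (n : ℤ) : Function.Periodic (fun θ : ℝ => φ θ * Complex.exp (-Complex.I * n * θ)) (2 * π) :=
  hφp.mul (periodic_cexp_neg_I_int_mul n)

theorem hasDerivAt_cexp_const_mul_ofReal (c : ℂ) (x : ℝ) :
    HasDerivAt (fun t : ℝ => Complex.exp (c * t)) (c * Complex.exp (c * x)) x := by
  simpa [mul_comm] using ((hasDerivAt_id x).ofReal_comp.const_mul c).cexp

/-- `2π` times the `n`-th Fourier coefficient of `φ`. -/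
noncomputable def fourierCoeffIntegral (φ : ℝ → ℂ) (n : ℤ) : ℂ :=
  ∫ θ in (0:ℝ)..(2 * π), φ θ * Complex.exp (-Complex.I * n * θ)

section FourierCoeffIntegral

variable {φ ψ : ℝ → ℂ}

theorem fourierCoeffIntegral_add (hφ : Continuous φ) (hψ : Continuous ψ) (n : ℤ) :
    fourierCoeffIntegral (fun θ => φ θ + ψ θ) n
      = fourierCoeffIntegral φ n + fourierCoeffIntegral ψ n := by
  have he : Continuous fun θ : ℝ => Complex.exp (-Complex.I * n * θ) := by fun_prop
  simp only [fourierCoeffIntegral, add_mul]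
  exact intervalIntegral.integral_add ((hφ.mul he).intervalIntegrable _ _)
    ((hψ.mul he).intervalIntegrable _ _)

theorem fourierCoeffIntegral_sub (hφ : Continuous φ) (hψ : Continuous ψ) (n : ℤ) :
    fourierCoeffIntegral (fun θ => φ θ - ψ θ) n
      = fourierCoeffIntegral φ n - fourierCoeffIntegral ψ n := by
  have he : Continuous fun θ : ℝ => Complex.exp (-Complex.I * n * θ) := by fun_prop
  simp only [fourierCoeffIntegral, sub_mul]
  exact intervalIntegral.integral_sub ((hφ.mul he).intervalIntegrable _ _)
    ((hψ.mul he).intervalIntegrable _ _)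

theorem fourierCoeffIntegral_const_mul (c : ℂ) (φ : ℝ → ℂ) (n : ℤ) :
    fourierCoeffIntegral (fun θ => c * φ θ) n = c * fourierCoeffIntegral φ n := by
  simp only [fourierCoeffIntegral, mul_assoc, intervalIntegral.integral_const_mul]

theorem fourierCoeffIntegral_comp_sub (hφp : Function.Periodic φ (2 * π)) (c : ℝ) (n : ℤ) :
    fourierCoeffIntegral (fun θ => φ (θ - c)) n
      = Complex.exp (-Complex.I * n * c) * fourierCoeffIntegral φ n := by
  have hshift : ∀ θ : ℝ, φ (θ - c) * Complex.exp (-Complex.I * n * θ)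
      = Complex.exp (-Complex.I * n * c) *
          (φ (θ - c) * Complex.exp (-Complex.I * n * ((θ - c : ℝ) : ℂ))) := fun θ => by
    rw [mul_left_comm, ← Complex.exp_add]; push_cast; ring_nf
  rw [fourierCoeffIntegral, intervalIntegral.integral_congr fun θ _ => hshift θ,
    intervalIntegral.integral_const_mul]
  congr 1
  rw [intervalIntegral.integral_comp_sub_right
      (fun θ => φ θ * Complex.exp (-Complex.I * n * θ)), zero_sub,
    show 2 * π - c = -c + 2 * π by ring,
    (hφp.mul_cexp_neg_I_int_mul n).intervalIntegral_add_eq (-c) 0, zero_add, fourierCoeffIntegral]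

theorem fourierCoeffIntegral_of_hasDerivAt {φ' : ℝ → ℂ} (hφ : ∀ x, HasDerivAt φ (φ' x) x) (hφ' : Continuous φ')
    (hφp : Function.Periodic φ (2 * π)) (n : ℤ) :
    fourierCoeffIntegral φ' n = Complex.I * n * fourierCoeffIntegral φ n := by
  set c : ℂ := -Complex.I * n
  have he : Continuous fun θ : ℝ => Complex.exp (c * θ) := by fun_prop
  have hφc : Continuous φ := Differentiable.continuous fun x => (hφ x).differentiableAt
  have hparts := intervalIntegral.integral_deriv_mul_eq_sub (a := 0) (b := 2 * π) (fun x _ => hφ x)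
    (fun x _ => hasDerivAt_cexp_const_mul_ofReal c x) (hφ'.intervalIntegrable _ _)
    ((continuous_const.mul he).intervalIntegrable _ _)
  have hboundary : φ (2 * π) * Complex.exp (c * ↑(2 * π)) = φ 0 * Complex.exp (c * ↑(0 : ℝ)) := by
    simpa only [zero_add] using hφp.mul_cexp_neg_I_int_mul n 0
  rw [← hboundary, sub_self, intervalIntegral.integral_add ((hφ'.fun_mul he).intervalIntegrable _ _)
    ((hφc.fun_mul (continuous_const.fun_mul he)).intervalIntegrable _ _)] at hparts
  simp only [mul_left_comm _ c, intervalIntegral.integral_const_mul] at hparts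
  unfold fourierCoeffIntegral
  linear_combination hparts

end FourierCoeffIntegral

noncomputable def thetaConv (w : ℝ → ℝ) (k : ℝ) (φ : ℝ → ℂ) (θ : ℝ) : ℂ :=
  ∫ ξ : ℝ, (w ξ : ℂ) * φ (θ - k * ξ)

section Convolution

variable {w : ℝ → ℝ} {φ : ℝ → ℂ}

theorem continuous_thetaConv (hw : Integrable w) (hφ : Continuous φ)
    (hφp : Function.Periodic φ (2 * π)) (k : ℝ) : Continuous (thetaConv w k φ) := by
  obtain ⟨M, hM⟩ := isBounded_iff_forall_norm_le.1 (hφp.isBounded_of_continuous two_pi_pos.ne' hφ)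
  refine continuous_of_dominated (bound := fun ξ => ‖w ξ‖ * M)
    (fun θ => hw.ofReal.aestronglyMeasurable.mul (by fun_prop : Continuous _).aestronglyMeasurable)
    (fun θ => Filter.Eventually.of_forall fun ξ => ?_) (hw.norm.mul_const M)
    (Filter.Eventually.of_forall fun ξ => by fun_prop)
  rw [norm_mul, Complex.norm_real]
  exact mul_le_mul_of_nonneg_left (hM _ ⟨_, rfl⟩) (norm_nonneg _)

theorem fourierCoeffIntegral_thetaConv (hw : Integrable w) (hφ : Continuous φ)
    (hφp : Function.Periodic φ (2 * π)) (k : ℝ) (n : ℤ) :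
    fourierCoeffIntegral (thetaConv w k φ) n
      = fourierKernel w (n * k) * fourierCoeffIntegral φ n := by
  obtain ⟨M, hM⟩ := isBounded_iff_forall_norm_le.1 (hφp.isBounded_of_continuous two_pi_pos.ne' hφ)
  set μ : Measure ℝ := volume.restrict (Set.Ioc 0 (2 * π))
  have hint : Integrable (fun p : ℝ × ℝ =>
      (w p.2 : ℂ) * φ (p.1 - k * p.2) * Complex.exp (-Complex.I * n * p.1)) (μ.prod volume) := by
    have hwμ : AEStronglyMeasurable (fun p : ℝ × ℝ => (w p.2 : ℂ)) (μ.prod volume) :=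
      hw.ofReal.aestronglyMeasurable.comp_quasiMeasurePreserving
        Measure.quasiMeasurePreserving_snd
    have hφe : Continuous fun p : ℝ × ℝ =>
        φ (p.1 - k * p.2) * Complex.exp (-Complex.I * n * p.1) := by fun_prop
    refine ((integrable_const (1 : ℝ)).mul_prod (hw.norm.mul_const M)).mono'
      ((hwμ.mul hφe.aestronglyMeasurable).congr (Filter.Eventually.of_forall fun p => ?_))
      (Filter.Eventually.of_forall fun p => ?_)
    · simp only [Pi.mul_apply, mul_assoc]
    · have he : ‖Complex.exp (-Complex.I * n * p.1)‖ = 1 := by simp [Complex.norm_exp]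
      rw [norm_mul, norm_mul, he, Complex.norm_real, mul_one, one_mul]
      exact mul_le_mul_of_nonneg_left (hM _ ⟨_, rfl⟩) (norm_nonneg _)
  have hinner : ∀ ξ : ℝ, ∫ θ, (w ξ : ℂ) * φ (θ - k * ξ) * Complex.exp (-Complex.I * n * θ) ∂μ
      = w ξ * fourierCoeffIntegral (fun θ => φ (θ - k * ξ)) n := fun ξ => by
    rw [fourierCoeffIntegral, ← intervalIntegral.integral_const_mul,
      intervalIntegral.integral_of_le two_pi_pos.le]
    simp only [μ, mul_assoc]
  calc fourierCoeffIntegral (thetaConv w k φ) n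
      = ∫ θ, (∫ ξ, (w ξ : ℂ) * φ (θ - k * ξ) * Complex.exp (-Complex.I * n * θ)) ∂μ := by
        simp only [fourierCoeffIntegral, thetaConv, intervalIntegral.integral_of_le two_pi_pos.le,
          integral_mul_const]
        rfl
    _ = ∫ ξ, (∫ θ, (w ξ : ℂ) * φ (θ - k * ξ) * Complex.exp (-Complex.I * n * θ) ∂μ) :=
        integral_integral_swap hint
    _ = fourierKernel w (n * k) * fourierCoeffIntegral φ n := by
        simp only [hinner, fourierCoeffIntegral_comp_sub hφp, ← mul_assoc, integral_mul_const,
          fourierKernel]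
        congr 1
        refine integral_congr_ae (Filter.Eventually.of_forall fun ξ => ?_)
        push_cast
        ring_nf

end Convolution

section Dispersion

variable {K : ℝ → ℝ}

theorem hasDerivAt_fourierKernel (hK : Integrable K) (hK1 : Integrable fun ξ => ξ * K ξ)
    (q : ℝ) : HasDerivAt (fourierKernel K) (-Complex.I * fourierKernel (fun ξ => ξ * K ξ) q) q := by
  have hdiff : ∀ ξ q : ℝ, HasDerivAt (fun q : ℝ => (K ξ : ℂ) * Complex.exp (-Complex.I * q * ξ))
      (K ξ * (-Complex.I * ξ * Complex.exp (-Complex.I * q * ξ))) q := fun ξ q => by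
    simpa only [mul_right_comm _ (ξ : ℂ)] using
      (hasDerivAt_cexp_const_mul_ofReal (-Complex.I * ξ) q).const_mul (K ξ : ℂ)
  have hexp : ∀ q : ℝ, Continuous fun ξ : ℝ => Complex.exp (-Complex.I * q * ξ) :=
    fun q => by fun_prop
  have hint : Integrable fun ξ : ℝ => (K ξ : ℂ) * Complex.exp (-Complex.I * q * ξ) :=
    hK.ofReal.mul_bdd (c := 1) (hexp q).aestronglyMeasurable
      (Filter.Eventually.of_forall fun ξ => by simp [Complex.norm_exp])
  have hbound : ∀ ξ q : ℝ,
      ‖(K ξ : ℂ) * (-Complex.I * ξ * Complex.exp (-Complex.I * q * ξ))‖ ≤ ‖ξ * K ξ‖ :=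
    fun ξ q => by simp [Complex.norm_exp, mul_comm]
  have hderiv := (hasDerivAt_integral_of_dominated_loc_of_deriv_le Filter.univ_mem
    (Filter.Eventually.of_forall fun q => hK.ofReal.aestronglyMeasurable.mul
      (hexp q).aestronglyMeasurable) hint
    (hK.ofReal.aestronglyMeasurable.mul (by fun_prop : Continuous _).aestronglyMeasurable)
    (Filter.Eventually.of_forall fun ξ q _ => hbound ξ q) hK1.norm
    (Filter.Eventually.of_forall fun ξ q _ => hdiff ξ q)).2
  refine hderiv.congr_deriv ?_
  rw [fourierKernel, ← integral_const_mul]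
  refine integral_congr_ae (Filter.Eventually.of_forall fun ξ => ?_)
  push_cast
  ring

theorem hasDerivAt_dispersion (hK : Integrable K) (hK1 : Integrable fun ξ => ξ * K ξ) (q : ℝ) :
    HasDerivAt (dispersion K)
      (fourierKernel K q - Complex.I * q * fourierKernel (fun ξ => ξ * K ξ) q) q := by
  have := (hasDerivAt_id q).ofReal_comp.mul (hasDerivAt_fourierKernel hK hK1 q)
  exact this.congr_deriv (by simp only [id, Complex.ofReal_one]; ring)

theorem hasDerivAt_deriv_dispersion (hK : Integrable K) (hK1 : Integrable fun ξ => ξ * K ξ)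
    (hK2 : Integrable fun ξ => ξ ^ 2 * K ξ) (q : ℝ) :
    HasDerivAt (deriv (dispersion K))
      (-2 * Complex.I * fourierKernel (fun ξ => ξ * K ξ) q
        - q * fourierKernel (fun ξ => ξ ^ 2 * K ξ) q) q := by
  have hξ2 : (fun ξ => ξ * (ξ * K ξ)) = fun ξ => ξ ^ 2 * K ξ := funext fun ξ => by ring
  have hK1' : HasDerivAt (fourierKernel fun ξ => ξ * K ξ)
      (-Complex.I * fourierKernel (fun ξ => ξ ^ 2 * K ξ) q) q := by
    simpa only [hξ2] using hasDerivAt_fourierKernel hK1 (hξ2 ▸ hK2) q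
  rw [funext fun q => (hasDerivAt_dispersion hK hK1 q).deriv]
  have := (hasDerivAt_fourierKernel hK hK1 q).sub
    (((hasDerivAt_id q).ofReal_comp.const_mul Complex.I).mul hK1')
  exact this.congr_deriv (by
    simp only [id, Complex.ofReal_one]
    linear_combination (↑q * fourierKernel (fun ξ => ξ ^ 2 * K ξ) q) * Complex.I_sq)

theorem differentiable_deriv_fourierKernel (hK : Integrable K)
    (hK1 : Integrable fun ξ => ξ * K ξ) (hK2 : Integrable fun ξ => ξ ^ 2 * K ξ) :
    Differentiable ℝ (deriv (fourierKernel K)) := by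
  have hK2' : Integrable fun ξ => ξ * (ξ * K ξ) := by simpa only [pow_two, mul_assoc] using hK2
  rw [funext fun q => (hasDerivAt_fourierKernel hK hK1 q).deriv]
  exact fun q => ((hasDerivAt_fourierKernel hK1 hK2' q).const_mul _).differentiableAt

end Dispersion

theorem appendix_fourier_coefficient_general
    (K : ℝ → ℝ)
    (hK : Integrable K) (hK1 : Integrable (fun ξ => ξ * K ξ))
    (hK2 : Integrable (fun ξ => ξ ^ 2 * K ξ))
    (k a : ℝ)
    (g g' g'' : ℝ → ℂ)
    (hg : ∀ x, HasDerivAt g (g' x) x) (hg' : ∀ x, HasDerivAt g' (g'' x) x)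
    (hg'' : Continuous g'') (hgp : Function.Periodic g (2 * π))
    (h h' : ℝ → ℂ)
    (hh : ∀ x, HasDerivAt h (h' x) x) (hh' : Continuous h')
    (hhp : Function.Periodic h (2 * π)) (n : ℤ) :
    (Differentiable ℝ (fourierKernel K) ∧ Differentiable ℝ (deriv (fourierKernel K))) ∧
    (1 / (2 * π) : ℂ) *
        ∫ θ in (0:ℝ)..(2 * π),
          ((∫ ξ : ℝ, (K ξ : ℂ) * h (θ - k * ξ))
            - (∫ ξ : ℝ, ((ξ * K ξ : ℝ) : ℂ) * ((a : ℂ) * g' (θ - k * ξ) + (k : ℂ) * h' (θ - k * ξ)))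
            + ((a * k / 2 : ℝ) : ℂ) * ∫ ξ : ℝ, ((ξ ^ 2 * K ξ : ℝ) : ℂ) * g'' (θ - k * ξ))
            * Complex.exp (-Complex.I * n * θ)
      = deriv (dispersion K) ((n : ℝ) * k) *
          ((1 / (2 * π) : ℂ) * ∫ θ in (0:ℝ)..(2 * π), h θ * Complex.exp (-Complex.I * n * θ))
        + ((n : ℂ) * (a : ℂ) / 2) * deriv (deriv (dispersion K)) ((n : ℝ) * k) *
          ((1 / (2 * π) : ℂ) * ∫ θ in (0:ℝ)..(2 * π), g θ * Complex.exp (-Complex.I * n * θ)) := by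
  refine ⟨⟨fun q => (hasDerivAt_fourierKernel hK hK1 q).differentiableAt,
    differentiable_deriv_fourierKernel hK hK1 hK2⟩, ?_⟩
  have hg'c : Continuous g' := Differentiable.continuous fun x => (hg' x).differentiableAt
  have hhc : Continuous h := Differentiable.continuous fun x => (hh x).differentiableAt
  have hg'p := hgp.periodic_of_hasDerivAt hg
  have hg''p := hg'p.periodic_of_hasDerivAt hg'
  have hh'p := hhp.periodic_of_hasDerivAt hh
  have hvc : Continuous fun x => (a : ℂ) * g' x + (k : ℂ) * h' x := by fun_prop
  have hvp : Function.Periodic (fun x => (a : ℂ) * g' x + (k : ℂ) * h' x) (2 * π) := fun x => by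
    simp only [hg'p x, hh'p x]
  have hKh := continuous_thetaConv hK hhc hhp k
  have hK1v := continuous_thetaConv hK1 hvc hvp k
  have hK2g := continuous_thetaConv hK2 hg'' hg''p k
  simp only [← fourierCoeffIntegral.eq_1, ← thetaConv.eq_1,
    ← thetaConv.eq_1 _ _ fun x => (a : ℂ) * g' x + (k : ℂ) * h' x]
  rw [fourierCoeffIntegral_add (hKh.fun_sub hK1v) (continuous_const.fun_mul hK2g),
    fourierCoeffIntegral_sub hKh hK1v, fourierCoeffIntegral_const_mul,
    fourierCoeffIntegral_thetaConv hK hhc hhp,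
    fourierCoeffIntegral_thetaConv hK1 hvc hvp,
    fourierCoeffIntegral_thetaConv hK2 hg'' hg''p,
    fourierCoeffIntegral_add (continuous_const.fun_mul hg'c) (continuous_const.fun_mul hh'),
    fourierCoeffIntegral_const_mul, fourierCoeffIntegral_const_mul,
    fourierCoeffIntegral_of_hasDerivAt hg' hg'' hg'p, fourierCoeffIntegral_of_hasDerivAt hg hg'c hgp,
    fourierCoeffIntegral_of_hasDerivAt hh hh' hhp,
    (hasDerivAt_dispersion hK hK1 _).deriv, (hasDerivAt_deriv_dispersion hK hK1 hK2 _).deriv]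
  push_cast
  ring_nf
  rw [Complex.I_sq]
  ring

/-- The key Fourier coefficient computation of Appendix A: the `n`-th Fourier
coefficient of `K∗_θ h − K₁∗_θ(a g' + k h') + ½ a k K₂∗_θ g''` equals
`Ω'(nk)·ĥ(n) + ½ n a Ω''(nk)·ĝ(n)` where `Ω(q) = qK̂(q)`. -/
theorem appendix_fourier_coefficient
    (K : ℝ → ℝ) (hKeven : ∀ x, K (-x) = K x)
    (hK : Integrable K) (hK1 : Integrable (fun ξ => ξ * K ξ))
    (hK2 : Integrable (fun ξ => ξ ^ 2 * K ξ))
    (k a : ℝ) (hk : k ≠ 0)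
    (g g' g'' : ℝ → ℂ)
    (hg : ∀ x, HasDerivAt g (g' x) x) (hg' : ∀ x, HasDerivAt g' (g'' x) x)
    (hg'' : Continuous g'') (hgp : Function.Periodic g (2 * π))
    (h h' : ℝ → ℂ)
    (hh : ∀ x, HasDerivAt h (h' x) x) (hh' : Continuous h')
    (hhp : Function.Periodic h (2 * π)) (n : ℤ) :
    (Differentiable ℝ (fourierKernel K) ∧ Differentiable ℝ (deriv (fourierKernel K))) ∧
    (1 / (2 * π) : ℂ) *
        ∫ θ in (0:ℝ)..(2 * π),
          ((∫ ξ : ℝ, (K ξ : ℂ) * h (θ - k * ξ))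
            - (∫ ξ : ℝ, ((ξ * K ξ : ℝ) : ℂ) * ((a : ℂ) * g' (θ - k * ξ) + (k : ℂ) * h' (θ - k * ξ)))
            + ((a * k / 2 : ℝ) : ℂ) * ∫ ξ : ℝ, ((ξ ^ 2 * K ξ : ℝ) : ℂ) * g'' (θ - k * ξ))
            * Complex.exp (-Complex.I * n * θ)
      = deriv (dispersion K) ((n : ℝ) * k) *
          ((1 / (2 * π) : ℂ) * ∫ θ in (0:ℝ)..(2 * π), h θ * Complex.exp (-Complex.I * n * θ))
        + ((n : ℂ) * (a : ℂ) / 2) * deriv (deriv (dispersion K)) ((n : ℝ) * k) *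
          ((1 / (2 * π) : ℂ) * ∫ θ in (0:ℝ)..(2 * π), g θ * Complex.exp (-Complex.I * n * θ)) :=
  appendix_fourier_coefficient_general K hK hK1 hK2 k a g g' g'' hg hg' hg'' hgp h h' hh hh' hhp n
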